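/- arXiv:1512.08411 — 5 statements merged into one kernel-verified Lean document; each statement's English description precedes it below -/
import Mathlib

section
/- Let σ be a (d+e)-dimensional simplex in ℝ^d × ℝ^e whose vertex set V is contained in (ℝ^d × {0}) ∪ ({0} × ℝ^e). Write σ_P = conv(V ∩ (ℝ^d × {0})) and σ_Q = conv(V ∩ ({0} × ℝ^e)). If the origin is not a vertex of σ, then exactly one of σ_P, σ_Q is full-dimensional in its ambient subspace (dimension d resp. e), and the other has dimension exactly d−1 resp. e−1. If the origin is a vertex of σ, then dim σ_P = d and dim σ_Q = e. -/
open Module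

/-- Dimensions of the two summand parts of a full-dimensional simplex in a free sum:
if `0` is not a vertex then exactly one of `σ_P`, `σ_Q` is full-dimensional and the
other has codimension 1; if `0` is a vertex then both are full-dimensional. -/
theorem stmt8 {d e : ℕ} (hd : 0 < d) (he : 0 < e)
    (V : Finset ((Fin d → ℝ) × (Fin e → ℝ)))
    (hind : AffineIndependent ℝ (Subtype.val : ↥(V : Set ((Fin d → ℝ) × (Fin e → ℝ))) →
      (Fin d → ℝ) × (Fin e → ℝ)))
    (hcard : V.card = d + e + 1)
    (hsub : ∀ p ∈ V, p.2 = 0 ∨ p.1 = 0) :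
    ((0 : (Fin d → ℝ) × (Fin e → ℝ)) ∉ V →
      Xor'
        (Module.finrank ℝ (vectorSpan ℝ
            (convexHull ℝ {p : (Fin d → ℝ) × (Fin e → ℝ) | p ∈ V ∧ p.2 = 0})) = d ∧
         Module.finrank ℝ (vectorSpan ℝ
            (convexHull ℝ {p : (Fin d → ℝ) × (Fin e → ℝ) | p ∈ V ∧ p.1 = 0})) = e - 1)
        (Module.finrank ℝ (vectorSpan ℝ
            (convexHull ℝ {p : (Fin d → ℝ) × (Fin e → ℝ) | p ∈ V ∧ p.2 = 0})) = d - 1 ∧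
         Module.finrank ℝ (vectorSpan ℝ
            (convexHull ℝ {p : (Fin d → ℝ) × (Fin e → ℝ) | p ∈ V ∧ p.1 = 0})) = e)) ∧
    ((0 : (Fin d → ℝ) × (Fin e → ℝ)) ∈ V →
        Module.finrank ℝ (vectorSpan ℝ
            (convexHull ℝ {p : (Fin d → ℝ) × (Fin e → ℝ) | p ∈ V ∧ p.2 = 0})) = d ∧
        Module.finrank ℝ (vectorSpan ℝ
            (convexHull ℝ {p : (Fin d → ℝ) × (Fin e → ℝ) | p ∈ V ∧ p.1 = 0})) = e) := by
  classical
  let E := (Fin d → ℝ) × (Fin e → ℝ)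
  set A : Finset E := V.filter (fun p => p.2 = 0) with hA
  set B : Finset E := V.filter (fun p => p.1 = 0) with hB
  have hAset : {p : E | p ∈ V ∧ p.2 = 0} = (A : Set E) := by
    ext p; simp [hA]
  have hBset : {p : E | p ∈ V ∧ p.1 = 0} = (B : Set E) := by
    ext p; simp [hB]
  -- vectorSpan of convexHull
  have hconv : ∀ s : Set E, vectorSpan ℝ (convexHull ℝ s) = vectorSpan ℝ s := by
    intro s
    rw [← direction_affineSpan, ← direction_affineSpan, affineSpan_convexHull]
  -- finrank of affinely independent finite subsets of V
  have key : ∀ s : Finset E, ∀ n : ℕ, s ⊆ V → s.card = n + 1 →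
      finrank ℝ (vectorSpan ℝ (s : Set E)) = n := by
    intro s n hsV hcardn
    have hindep : AffineIndependent ℝ (fun x => x : ↥(s : Set E) → E) :=
      AffineIndependent.mono hind (Finset.coe_subset.mpr hsV)
    have h := hindep.finrank_vectorSpan (n := n)
      (by simp [hcardn])
    rwa [Subtype.range_coe] at h
  -- finrank of the coordinate subspaces
  have hKd : finrank ℝ (LinearMap.ker (LinearMap.snd ℝ (Fin d → ℝ) (Fin e → ℝ))) = d := by
    have h := LinearMap.finrank_range_add_finrank_ker (LinearMap.snd ℝ (Fin d → ℝ) (Fin e → ℝ))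
    rw [LinearMap.range_eq_top.mpr Prod.snd_surjective] at h
    simp only [finrank_top] at h
    have h1 : finrank ℝ (Fin e → ℝ) = e := by simp
    have h2 : finrank ℝ ((Fin d → ℝ) × (Fin e → ℝ)) = d + e := by simp
    omega
  have hKe : finrank ℝ (LinearMap.ker (LinearMap.fst ℝ (Fin d → ℝ) (Fin e → ℝ))) = e := by
    have h := LinearMap.finrank_range_add_finrank_ker (LinearMap.fst ℝ (Fin d → ℝ) (Fin e → ℝ))
    rw [LinearMap.range_eq_top.mpr Prod.fst_surjective] at h
    simp only [finrank_top] at h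
    have h1 : finrank ℝ (Fin d → ℝ) = d := by simp
    have h2 : finrank ℝ ((Fin d → ℝ) × (Fin e → ℝ)) = d + e := by simp
    omega
  -- vector spans lie in the coordinate subspaces
  have hspanA : vectorSpan ℝ (A : Set E) ≤ LinearMap.ker (LinearMap.snd ℝ (Fin d → ℝ) (Fin e → ℝ)) := by
    rw [vectorSpan_def, Submodule.span_le]
    rintro v ⟨x, hx, y, hy, rfl⟩
    simp only [hA, Finset.coe_filter, Set.mem_setOf_eq] at hx hy
    simp [LinearMap.mem_ker, Prod.snd_sub, hx.2, hy.2]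
  have hspanB : vectorSpan ℝ (B : Set E) ≤ LinearMap.ker (LinearMap.fst ℝ (Fin d → ℝ) (Fin e → ℝ)) := by
    rw [vectorSpan_def, Submodule.span_le]
    rintro v ⟨x, hx, y, hy, rfl⟩
    simp only [hB, Finset.coe_filter, Set.mem_setOf_eq] at hx hy
    simp [LinearMap.mem_ker, Prod.fst_sub, hx.2, hy.2]
  -- card bounds
  have hAle : A.card ≤ d + 1 := by
    rcases Nat.eq_zero_or_pos A.card with h0 | hpos
    · omega
    · obtain ⟨n, hn⟩ : ∃ n, A.card = n + 1 := ⟨A.card - 1, by omega⟩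
      have h1 := key A n (Finset.filter_subset _ _) hn
      have h2 : finrank ℝ (vectorSpan ℝ (A : Set E)) ≤ d := by
        calc finrank ℝ (vectorSpan ℝ (A : Set E))
            ≤ finrank ℝ (LinearMap.ker (LinearMap.snd ℝ (Fin d → ℝ) (Fin e → ℝ))) :=
              Submodule.finrank_mono hspanA
          _ = d := hKd
      omega
  have hBle : B.card ≤ e + 1 := by
    rcases Nat.eq_zero_or_pos B.card with h0 | hpos
    · omega
    · obtain ⟨n, hn⟩ : ∃ n, B.card = n + 1 := ⟨B.card - 1, by omega⟩
      have h1 := key B n (Finset.filter_subset _ _) hn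
      have h2 : finrank ℝ (vectorSpan ℝ (B : Set E)) ≤ e := by
        calc finrank ℝ (vectorSpan ℝ (B : Set E))
            ≤ finrank ℝ (LinearMap.ker (LinearMap.fst ℝ (Fin d → ℝ) (Fin e → ℝ))) :=
              Submodule.finrank_mono hspanB
          _ = e := hKe
      omega
  -- union and intersection
  have hunion : A ∪ B = V := by
    apply Finset.Subset.antisymm
    · exact Finset.union_subset (Finset.filter_subset _ _) (Finset.filter_subset _ _)
    · intro p hp
      rcases hsub p hp with h | h
      · exact Finset.mem_union_left _ (Finset.mem_filter.mpr ⟨hp, h⟩)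
      · exact Finset.mem_union_right _ (Finset.mem_filter.mpr ⟨hp, h⟩)
  have hintersub : ∀ p ∈ A ∩ B, p = (0 : E) := by
    intro p hp
    simp only [hA, hB, Finset.mem_inter, Finset.mem_filter] at hp
    exact Prod.ext hp.2.2 hp.1.2
  have hcardsum := Finset.card_union_add_card_inter A B
  rw [hunion, hcard] at hcardsum
  -- rewrite the goal in terms of A, B
  rw [hAset, hBset, hconv, hconv]
  constructor
  · -- 0 ∉ V
    intro h0
    have hinter : A ∩ B = ∅ := by
      rw [Finset.eq_empty_iff_forall_notMem]
      intro p hp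
      have := hintersub p hp
      subst this
      exact h0 (Finset.mem_of_mem_filter _ (Finset.mem_inter.mp hp).1)
    rw [hinter, Finset.card_empty] at hcardsum
    rcases Nat.lt_or_ge A.card (d + 1) with hlt | hge
    · -- A.card ≤ d, so A.card = d, B.card = e + 1
      have hAc : A.card = d := by
        have : B.card = e + 1 := by omega
        omega
      have hBc : B.card = e + 1 := by omega
      right
      refine ⟨⟨?_, key B e (Finset.filter_subset _ _) hBc⟩, ?_⟩
      · have : A.card = (d - 1) + 1 := by omega
        exact key A (d - 1) (Finset.filter_subset _ _) this
      · rintro ⟨hc, -⟩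
        have : A.card = (d - 1) + 1 := by omega
        have := key A (d - 1) (Finset.filter_subset _ _) this
        omega
    · -- A.card = d + 1, B.card = e
      have hAc : A.card = d + 1 := by omega
      have hBc : B.card = e := by omega
      left
      refine ⟨⟨key A d (Finset.filter_subset _ _) hAc, ?_⟩, ?_⟩
      · have : B.card = (e - 1) + 1 := by omega
        exact key B (e - 1) (Finset.filter_subset _ _) this
      · rintro ⟨hc, -⟩
        have := key A d (Finset.filter_subset _ _) hAc
        omega
  · -- 0 ∈ V
    intro h0
    have hinter : A ∩ B = {(0 : E)} := by
      apply Finset.Subset.antisymm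
      · intro p hp
        simp [hintersub p hp]
      · intro p hp
        simp only [Finset.mem_singleton] at hp
        subst hp
        simp [hA, hB, Finset.mem_inter, Finset.mem_filter, h0]
    rw [hinter, Finset.card_singleton] at hcardsum
    have hAc : A.card = d + 1 := by omega
    have hBc : B.card = e + 1 := by omega
    exact ⟨key A d (Finset.filter_subset _ _) hAc, key B e (Finset.filter_subset _ _) hBc⟩
end

section
/- Let σ, τ be simplices in a triangulation of a point configuration in ℝ^d (so σ and τ intersect in a common face). If there exist a point v and a scalar ν > 1 such that the segment from 0 to νv is contained in σ, and v ∈ τ but neither 0 ∈ τ nor νv ∈ τ, then a contradiction arises: σ ∩ τ is not a face of τ. Formally: if σ, τ ⊆ ℝ^d are simplices intersecting in a common face F, [0, νv] ⊆ σ, v ∈ τ, ν > 1, and 0 ∉ τ, then νv ∈ τ. -/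
open Finset

/-- The convex hull of a subset of the vertices of a simplex is extreme in the simplex. -/
lemma face_extreme_aux {n : ℕ} (V F : Finset (Fin n → ℝ))
    (hV : AffineIndependent ℝ (Subtype.val : ↥(V : Set (Fin n → ℝ)) → (Fin n → ℝ)))
    (hF : F ⊆ V) {x y z : Fin n → ℝ}
    (hx : x ∈ convexHull ℝ (V : Set (Fin n → ℝ)))
    (hy : y ∈ convexHull ℝ (V : Set (Fin n → ℝ)))
    (hz : z ∈ convexHull ℝ (F : Set (Fin n → ℝ)))
    {a b : ℝ} (ha : 0 < a) (hb : 0 < b) (hab : a + b = 1)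
    (hzxy : a • x + b • y = z) : y ∈ convexHull ℝ (F : Set (Fin n → ℝ)) := by
  obtain ⟨f, hf0, hf1, hfx⟩ := Finset.mem_convexHull'.1 hx
  obtain ⟨g, hg0, hg1, hgy⟩ := Finset.mem_convexHull'.1 hy
  obtain ⟨h, hh0, hh1, hhz⟩ := Finset.mem_convexHull'.1 hz
  set h' : (Fin n → ℝ) → ℝ := fun w => if w ∈ F then h w else 0 with hh'
  have hsum1 : ∑ w ∈ V, h' w = 1 := by
    calc ∑ w ∈ V, h' w = ∑ w ∈ F, h' w :=
          (Finset.sum_subset hF fun w _ hw => by simp only [hh', if_neg hw]).symm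
      _ = ∑ w ∈ F, h w := Finset.sum_congr rfl fun w hw => by simp only [hh', if_pos hw]
      _ = 1 := hh1
  have hsumz : ∑ w ∈ V, h' w • w = z := by
    calc ∑ w ∈ V, h' w • w = ∑ w ∈ F, h' w • w :=
          (Finset.sum_subset hF fun w _ hw => by
            simp only [hh', if_neg hw, zero_smul]).symm
      _ = ∑ w ∈ F, h w • w := Finset.sum_congr rfl fun w hw => by
            simp only [hh', if_pos hw]
      _ = z := hhz
  have key : ∀ w ∈ V, a * f w + b * g w = h' w := by
    refine hV.eq_of_sum_eq_sum_subtype (w₁ := fun w => a * f w + b * g w) (w₂ := h') ?_ ?_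
    · rw [hsum1]; simp [Finset.sum_add_distrib, ← Finset.mul_sum, hf1, hg1, hab]
    · rw [hsumz, ← hzxy, ← hfx, ← hgy]
      simp [add_smul, mul_smul, Finset.sum_add_distrib, Finset.smul_sum]
  have hgF : ∀ w ∈ V, w ∉ F → g w = 0 := by
    intro w hwV hwF
    have h0 : a * f w + b * g w = 0 := by
      rw [key w hwV]; simp only [hh', if_neg hwF]
    have h1 : 0 ≤ a * f w := mul_nonneg ha.le (hf0 w hwV)
    have h2 : 0 ≤ b * g w := mul_nonneg hb.le (hg0 w hwV)
    have hb0 : b * g w = 0 := le_antisymm (by linarith) h2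
    exact (mul_eq_zero.1 hb0).resolve_left hb.ne'
  refine Finset.mem_convexHull'.2 ⟨g, fun w hw => hg0 w (hF hw), ?_, ?_⟩
  · rw [Finset.sum_subset hF fun w hwV hwF => hgF w hwV hwF]; exact hg1
  · rw [Finset.sum_subset hF fun w hwV hwF => by rw [hgF w hwV hwF, zero_smul]]; exact hgy

/-- If simplices `σ`, `τ` of a triangulation intersect in a common face, the segment
`[0, ν•v]` lies in `σ`, `v ∈ τ`, `ν > 1` and `0 ∉ τ`, then `ν•v ∈ τ`. -/
theorem stmt11 {n : ℕ} (Vσ Vτ : Finset (Fin n → ℝ))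
    (hVσ : AffineIndependent ℝ (Subtype.val : ↥(Vσ : Set (Fin n → ℝ)) → (Fin n → ℝ)))
    (hVτ : AffineIndependent ℝ (Subtype.val : ↥(Vτ : Set (Fin n → ℝ)) → (Fin n → ℝ)))
    (σ τ : Set (Fin n → ℝ))
    (hσdef : σ = convexHull ℝ ↑Vσ) (hτdef : τ = convexHull ℝ ↑Vτ)
    (Fσ : Finset (Fin n → ℝ)) (hFσ : Fσ ⊆ Vσ) (hfσ : σ ∩ τ = convexHull ℝ ↑Fσ)
    (Fτ : Finset (Fin n → ℝ)) (hFτ : Fτ ⊆ Vτ) (hfτ : σ ∩ τ = convexHull ℝ ↑Fτ)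
    (v : Fin n → ℝ) (ν : ℝ) (hν : 1 < ν)
    (hseg : segment ℝ 0 (ν • v) ⊆ σ) (hvτ : v ∈ τ) (h0τ : (0 : Fin n → ℝ) ∉ τ) :
    ν • v ∈ τ := by
  have hν0 : (0:ℝ) < ν := lt_trans one_pos hν
  have hb : (0:ℝ) < 1/ν := by positivity
  have ha : (0:ℝ) < 1 - 1/ν := by
    rw [sub_pos, div_lt_one hν0]; exact hν
  have hvcomb : (1 - 1/ν) • (0 : Fin n → ℝ) + (1/ν) • (ν • v) = v := by
    rw [smul_zero, zero_add, smul_smul, one_div, inv_mul_cancel₀ hν0.ne', one_smul]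
  have hvseg : v ∈ segment ℝ (0 : Fin n → ℝ) (ν • v) :=
    ⟨1 - 1/ν, 1/ν, ha.le, hb.le, by ring, hvcomb⟩
  have hvσ : v ∈ σ := hseg hvseg
  have hvF : v ∈ convexHull ℝ (Fσ : Set (Fin n → ℝ)) := hfσ ▸ ⟨hvσ, hvτ⟩
  have h0σ : (0 : Fin n → ℝ) ∈ σ := hseg (left_mem_segment ℝ _ _)
  have hνvσ : ν • v ∈ σ := hseg (right_mem_segment ℝ _ _)
  have key : ν • v ∈ convexHull ℝ (Fσ : Set (Fin n → ℝ)) :=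
    face_extreme_aux Vσ Fσ hVσ hFσ (hσdef ▸ h0σ) (hσdef ▸ hνvσ) hvF ha hb (by ring) hvcomb
  have : ν • v ∈ σ ∩ τ := hfσ ▸ key
  exact this.2
end

section
/- Let σ, τ be full-dimensional simplices of a triangulation in ℝ^d with σ ≺ τ in the stabbing order (σ ≠ τ). Then there exists a vector r ∈ ℝ^d \ {0} and scalars 0 ≤ λ < μ with λr ∈ σ and μr ∈ τ. -/
/-!
Lift the vertices of `σ` to `(p, 1)` and those of `τ` to `(-q, -1)` in `ℝᵈ × ℝ`. If `(0, 1)` is a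
nonnegative combination of these, then `λ • x = μ • y` with `x ∈ σ`, `y ∈ τ`, `λ = 1 + μ`, `μ ≥ 0`,
so the ray through `y` meets `σ` at parameter `μ / λ < 1` before meeting `τ` at `1`. Otherwise
Farkas' lemma (finitely generated cones are closed, by conic Carathéodory) gives a hyperplane
weakly separating `σ` from `τ` with the origin strictly on the side of `τ`, contradicting `σ ⪯ τ`.
Finally `y ≠ 0`, because the separating hyperplane off the origin given by `σ ⪯ τ` keeps `0` out
of `τ`.
-/

open Matrix

/-- The hyperplane `{x : aᵀx = b}` weakly separates `σ` from `τ`, with `σ` on the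
`≤ b` side. -/
def WeaklySep {d : ℕ} (a : Fin d → ℝ) (b : ℝ) (σ τ : Set (Fin d → ℝ)) : Prop :=
  (∀ x ∈ σ, a ⬝ᵥ x ≤ b) ∧ ∀ y ∈ τ, b ≤ a ⬝ᵥ y

/-- The stabbing order: `σ ⪯ τ` iff `σ = τ`, or every hyperplane weakly separating
`σ` and `τ` has `σ` on the same closed side as the origin, and at least one separating
hyperplane does not pass through the origin. -/
def StabLE {d : ℕ} (σ τ : Set (Fin d → ℝ)) : Prop :=
  σ = τ ∨
    ((∀ (a : Fin d → ℝ) (b : ℝ), a ≠ 0 → WeaklySep a b σ τ → 0 ≤ b) ∧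
     (∀ (a : Fin d → ℝ) (b : ℝ), a ≠ 0 → WeaklySep a b τ σ → b ≤ 0) ∧
     ∃ (a : Fin d → ℝ) (b : ℝ), a ≠ 0 ∧ b ≠ 0 ∧
       (WeaklySep a b σ τ ∨ WeaklySep a b τ σ))

namespace PointedCone

variable {ι E : Type*} [AddCommGroup E] [Module ℝ E] {v : ι → E} {x : E}

theorem mem_hull_image_finset_iff {s : Finset ι} :
    x ∈ hull ℝ (v '' s) ↔ ∃ c : ι → ℝ, (∀ i ∈ s, 0 ≤ c i) ∧ ∑ i ∈ s, c i • v i = x := by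
  rw [Submodule.mem_span_image_finset_iff_exists_fun']
  constructor
  · rintro ⟨c, rfl⟩
    exact ⟨fun i => c i, fun i _ => (c i).2, by simp only [Nonneg.coe_smul]⟩
  · classical
    rintro ⟨c, hc, rfl⟩
    refine ⟨fun i => if hi : i ∈ s then ⟨c i, hc i hi⟩ else 0, Finset.sum_congr rfl fun i hi => ?_⟩
    simp only [dif_pos hi, Nonneg.mk_smul]

theorem mem_hull_range_iff [Fintype ι] :
    x ∈ hull ℝ (Set.range v) ↔ ∃ c : ι → ℝ, 0 ≤ c ∧ ∑ i, c i • v i = x := by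
  rw [← Set.image_univ, ← Finset.coe_univ, mem_hull_image_finset_iff]
  simp only [Finset.mem_univ, forall_const, Pi.le_def, Pi.zero_apply]

theorem exists_mem_hull_image_erase [DecidableEq ι] {t : Finset ι}
    (h : ¬LinearIndepOn ℝ v t) (hx : x ∈ hull ℝ (v '' t)) :
    ∃ i ∈ t, x ∈ hull ℝ (v '' ↑(t.erase i)) := by
  rw [mem_hull_image_finset_iff] at hx
  obtain ⟨c, hc, rfl⟩ := hx
  obtain ⟨g, hg, hgpos⟩ : ∃ g : ι → ℝ, ∑ i ∈ t, g i • v i = 0 ∧ ∃ i ∈ t, 0 < g i := by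
    obtain ⟨g, hg, i, hi, hgi⟩ := not_linearIndepOn_finset_iff.mp h
    rcases hgi.lt_or_gt with hneg | hpos
    · exact ⟨-g, by simp [neg_smul, hg], i, hi, by simpa using hneg⟩
    · exact ⟨g, hg, i, hi, hpos⟩
  obtain ⟨i₀, hi₀, hmin⟩ := (t.filter (0 < g ·)).exists_min_image (fun i => c i / g i)
    (by simpa [Finset.Nonempty] using hgpos)
  rw [Finset.mem_filter] at hi₀
  -- `k • g` is the largest multiple of the relation that can be subtracted from `c` keeping it
  -- nonnegative; it kills the coefficient of `i₀`.
  set k := c i₀ / g i₀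
  have hk : 0 ≤ k := div_nonneg (hc i₀ hi₀.1) hi₀.2.le
  refine ⟨i₀, hi₀.1, mem_hull_image_finset_iff.mpr ⟨fun i => c i - k * g i, fun i hi => ?_, ?_⟩⟩
  · have hit := Finset.mem_of_mem_erase hi
    rcases le_or_gt (g i) 0 with hgi | hgi
    · nlinarith [hc i hit]
    · have := hmin i (Finset.mem_filter.mpr ⟨hit, hgi⟩)
      rw [le_div_iff₀ hgi] at this
      linarith
  · rw [Finset.sum_erase _ (by simp [k, hi₀.2.ne'])]
    simp only [sub_smul, Finset.sum_sub_distrib, mul_smul, ← Finset.smul_sum, hg, smul_zero,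
      sub_zero]

variable {F : Type*} [NormedAddCommGroup F] [NormedSpace ℝ F]

theorem isClosed_hull_range_of_linearIndependent [Fintype ι] {w : ι → F}
    (hw : LinearIndependent ℝ w) : IsClosed (hull ℝ (Set.range w) : Set F) := by
  have hemb := (Fintype.linearCombination ℝ w).isClosedEmbedding_of_injective
    (LinearMap.ker_eq_bot.mpr hw.fintypeLinearCombination_injective)
  convert hemb.isClosedMap _ (isClosed_Ici (a := (0 : ι → ℝ))) using 1
  ext x
  simp [mem_hull_range_iff, Fintype.linearCombination_apply]

theorem isClosed_hull_image_finset [FiniteDimensional ℝ F] (v : ι → F) (t : Finset ι) :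
    IsClosed (hull ℝ (v '' t) : Set F) := by
  classical
  induction t using Finset.strongInduction with
  | H t ih =>
    by_cases hli : LinearIndepOn ℝ v t
    · rw [Set.image_eq_range]
      exact isClosed_hull_range_of_linearIndependent hli
    · have hunion :
          (hull ℝ (v '' t) : Set F) = ⋃ i ∈ t, (hull ℝ (v '' ↑(t.erase i)) : Set F) := by
        refine subset_antisymm (fun x hx => ?_) (Set.iUnion₂_subset fun i _ => ?_)
        · simpa using exists_mem_hull_image_erase hli hx
        · exact Submodule.span_mono (Set.image_mono (Finset.coe_subset.mpr (t.erase_subset i)))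
      rw [hunion]
      exact isClosed_biUnion_finset fun i hi => ih _ (Finset.erase_ssubset hi)

theorem isClosed_hull_range [Finite ι] [FiniteDimensional ℝ F] (v : ι → F) :
    IsClosed (hull ℝ (Set.range v) : Set F) := by
  have := Fintype.ofFinite ι
  simpa using isClosed_hull_image_finset v Finset.univ

theorem exists_strongDual_nonneg_of_notMem_hull_range [Finite ι] [FiniteDimensional ℝ F]
    {v : ι → F} {x : F} (hx : x ∉ hull ℝ (Set.range v)) :
    ∃ f : StrongDual ℝ F, (∀ i, 0 ≤ f (v i)) ∧ f x < 0 := by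
  obtain ⟨f, hf, hfx⟩ := ProperCone.hyperplane_separation_point
    ⟨hull ℝ (Set.range v), isClosed_hull_range v⟩ hx
  exact ⟨f, fun i => hf _ (subset_hull (Set.mem_range_self i)), hfx⟩

end PointedCone

theorem exists_mem_convexHull_sum_smul_eq {ι E : Type*} [Fintype ι] [Nonempty ι]
    [AddCommGroup E] [Module ℝ E] (z : ι → E) {c : ι → ℝ} (hc : 0 ≤ c) :
    ∃ y ∈ convexHull ℝ (Set.range z), (∑ i, c i) • y = ∑ i, c i • z i := by
  rcases (Finset.sum_nonneg fun i _ => hc i).eq_or_lt with hzero | hpos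
  · have hc0 : ∀ i, c i = 0 := fun i =>
      (Finset.sum_eq_zero_iff_of_nonneg fun i _ => hc i).mp hzero.symm i (Finset.mem_univ i)
    obtain ⟨i⟩ := ‹Nonempty ι›
    exact ⟨z i, subset_convexHull ℝ _ (Set.mem_range_self i), by simp [hc0]⟩
  · refine ⟨Finset.univ.centerMass c z,
      Finset.centerMass_mem_convexHull _ (fun i _ => hc i) hpos fun i _ => Set.mem_range_self i, ?_⟩
    rw [Finset.centerMass, smul_inv_smul₀ hpos.ne']

section Stabbing

variable {d : ℕ}

theorem WeaklySep.convexHull {a : Fin d → ℝ} {b : ℝ} {σ τ : Set (Fin d → ℝ)}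
    (h : WeaklySep a b σ τ) : WeaklySep a b (convexHull ℝ σ) (convexHull ℝ τ) := by
  have hlin : IsLinearMap ℝ (a ⬝ᵥ ·) := ⟨dotProduct_add a, fun c x => dotProduct_smul c a x⟩
  exact ⟨fun x hx => convexHull_min h.1 (convex_halfSpace_le hlin b) hx,
    fun y hy => convexHull_min h.2 (convex_halfSpace_ge hlin b) hy⟩

theorem StabLE.zero_notMem_right {σ τ : Set (Fin d → ℝ)} (h : StabLE σ τ) (hne : σ ≠ τ) :
    (0 : Fin d → ℝ) ∉ τ := by
  obtain ⟨H₁, H₂, a, b, ha, hb, hsep | hsep⟩ := h.resolve_left hne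
  · intro h0
    have hb_nonpos : b ≤ 0 := by simpa using hsep.2 0 h0
    exact hb (le_antisymm hb_nonpos (H₁ a b ha hsep))
  · intro h0
    have hb_nonneg : 0 ≤ b := by simpa using hsep.1 0 h0
    exact hb (le_antisymm (H₂ a b ha hsep) hb_nonneg)

section StabCone

variable {ι κ : Type*} [Fintype ι] [Fintype κ] (P : ι → Fin d → ℝ) (Q : κ → Fin d → ℝ)

def stabCone : PointedCone ℝ ((Fin d → ℝ) × ℝ) :=
  PointedCone.hull ℝ (Set.range (Sum.elim (fun i => (P i, 1)) fun j => (-Q j, -1)))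

variable {P Q}

theorem exists_smul_mem_of_mem_stabCone [Nonempty κ]
    (h : ((0 : Fin d → ℝ), (1 : ℝ)) ∈ stabCone P Q) :
    ∃ y ∈ convexHull ℝ (Set.range Q), ∃ t : ℝ, 0 ≤ t ∧ t < 1 ∧
      t • y ∈ convexHull ℝ (Set.range P) := by
  obtain ⟨c, hc, hsum⟩ := PointedCone.mem_hull_range_iff.mp h
  rw [Fintype.sum_sum_type] at hsum
  have hfst : ∑ i, c (.inl i) • P i = ∑ j, c (.inr j) • Q j := by
    simpa [Prod.fst_sum, add_neg_eq_zero] using congrArg Prod.fst hsum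
  have hsnd : ∑ i, c (.inl i) = 1 + ∑ j, c (.inr j) := by
    simpa [Prod.snd_sum, add_neg_eq_iff_eq_add] using congrArg Prod.snd hsum
  have hM : 0 ≤ ∑ j, c (.inr j) := Finset.sum_nonneg fun j _ => hc _
  have hΛ : 0 < ∑ i, c (.inl i) := by linarith
  have : Nonempty ι := Finset.univ_nonempty_iff.mp (Finset.nonempty_of_sum_ne_zero hΛ.ne')
  obtain ⟨x, hx, hxeq⟩ := exists_mem_convexHull_sum_smul_eq P fun i => hc (.inl i)
  obtain ⟨y, hy, hyeq⟩ := exists_mem_convexHull_sum_smul_eq Q fun j => hc (.inr j)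
  refine ⟨y, hy, (∑ j, c (.inr j)) / ∑ i, c (.inl i), by positivity,
    (div_lt_one hΛ).mpr (by linarith), ?_⟩
  rwa [div_eq_inv_mul, mul_smul, hyeq, ← hfst, ← hxeq, inv_smul_smul₀ hΛ.ne']

theorem exists_weaklySep_neg_of_notMem_stabCone [Nonempty ι]
    (h : ((0 : Fin d → ℝ), (1 : ℝ)) ∉ stabCone P Q) :
    ∃ a ≠ 0, ∃ b < 0, WeaklySep a b (convexHull ℝ (Set.range P)) (convexHull ℝ (Set.range Q)) := by
  obtain ⟨f, hf, hf01⟩ := PointedCone.exists_strongDual_nonneg_of_notMem_hull_range h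
  set g : Module.Dual ℝ (Fin d → ℝ) := -(f.toLinearMap ∘ₗ LinearMap.inl ℝ _ ℝ)
  set a := (dotProductEquiv ℝ (Fin d)).symm g
  have hf_apply : ∀ x s, f (x, s) = -(a ⬝ᵥ x) + s * f (0, 1) := by
    intro x s
    have ha : a ⬝ᵥ x = g x :=
      LinearMap.congr_fun ((dotProductEquiv ℝ (Fin d)).apply_symm_apply g) x
    have hxs : ((x, s) : (Fin d → ℝ) × ℝ) = (x, 0) + s • (0, 1) := by simp
    rw [hxs, map_add, map_smul, smul_eq_mul, ha]
    simp [g]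
  have hP : ∀ i, a ⬝ᵥ P i ≤ f (0, 1) := fun i => by
    have := hf (.inl i)
    rw [Sum.elim_inl, hf_apply] at this
    linarith
  have hQ : ∀ j, f (0, 1) ≤ a ⬝ᵥ Q j := fun j => by
    have := hf (.inr j)
    rw [Sum.elim_inr, hf_apply, dotProduct_neg] at this
    linarith
  refine ⟨a, fun ha => ?_, f (0, 1), hf01, WeaklySep.convexHull ⟨?_, ?_⟩⟩
  · obtain ⟨i⟩ := ‹Nonempty ι›
    have := hP i
    rw [ha, zero_dotProduct] at this
    linarith
  · rintro _ ⟨i, rfl⟩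
    exact hP i
  · rintro _ ⟨j, rfl⟩
    exact hQ j

theorem exists_smul_mem_convexHull_of_forall_weaklySep_nonneg [Nonempty ι] [Nonempty κ]
    (H : ∀ a b, a ≠ 0 → WeaklySep a b (convexHull ℝ (Set.range P)) (convexHull ℝ (Set.range Q)) →
      0 ≤ b) :
    ∃ y ∈ convexHull ℝ (Set.range Q), ∃ t : ℝ, 0 ≤ t ∧ t < 1 ∧
      t • y ∈ convexHull ℝ (Set.range P) := by
  by_cases h : ((0 : Fin d → ℝ), (1 : ℝ)) ∈ stabCone P Q
  · exact exists_smul_mem_of_mem_stabCone h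
  · obtain ⟨a, ha, b, hb, hsep⟩ := exists_weaklySep_neg_of_notMem_stabCone h
    exact absurd (H a b ha hsep) hb.not_ge

end StabCone

end Stabbing

theorem stmt16_general {d : ℕ} (Vσ Vτ : Finset (Fin d → ℝ))
    (hcσ : Vσ.card = d + 1) (hcτ : Vτ.card = d + 1)
    (σ τ : Set (Fin d → ℝ))
    (hσdef : σ = convexHull ℝ ↑Vσ) (hτdef : τ = convexHull ℝ ↑Vτ)
    (hlt : StabLE σ τ) (hne : σ ≠ τ) :
    ∃ r : Fin d → ℝ, r ≠ 0 ∧ ∃ l m : ℝ, 0 ≤ l ∧ l < m ∧ l • r ∈ σ ∧ m • r ∈ τ := by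
  have : Nonempty Vσ := (Finset.card_pos.mp (by omega)).to_subtype
  have : Nonempty Vτ := (Finset.card_pos.mp (by omega)).to_subtype
  have hσ : σ = convexHull ℝ (Set.range ((↑) : Vσ → Fin d → ℝ)) := by simpa using hσdef
  have hτ : τ = convexHull ℝ (Set.range ((↑) : Vτ → Fin d → ℝ)) := by simpa using hτdef
  obtain ⟨H, -⟩ := hlt.resolve_left hne
  obtain ⟨y, hy, t, ht0, ht1, hty⟩ :=
    exists_smul_mem_convexHull_of_forall_weaklySep_nonneg (hσ ▸ hτ ▸ H)
  rw [← hσ] at hty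
  rw [← hτ] at hy
  exact ⟨y, ne_of_mem_of_not_mem hy (hlt.zero_notMem_right hne), t, 1, ht0, ht1, hty,
    by rwa [one_smul]⟩

/-- If `σ ≺ τ` in the stabbing order (for full-dimensional simplices of a triangulation,
intersecting in a common face), then some ray from the origin stabs first `σ`, then `τ`. -/
theorem stmt16 {d : ℕ} (Vσ Vτ : Finset (Fin d → ℝ))
    (hVσ : AffineIndependent ℝ (Subtype.val : ↥(Vσ : Set (Fin d → ℝ)) → (Fin d → ℝ)))
    (hVτ : AffineIndependent ℝ (Subtype.val : ↥(Vτ : Set (Fin d → ℝ)) → (Fin d → ℝ)))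
    (hcσ : Vσ.card = d + 1) (hcτ : Vτ.card = d + 1)
    (σ τ : Set (Fin d → ℝ))
    (hσdef : σ = convexHull ℝ ↑Vσ) (hτdef : τ = convexHull ℝ ↑Vτ)
    (Fσ : Finset (Fin d → ℝ)) (hFσ : Fσ ⊆ Vσ) (hfσ : σ ∩ τ = convexHull ℝ ↑Fσ)
    (Fτ : Finset (Fin d → ℝ)) (hFτ : Fτ ⊆ Vτ) (hfτ : σ ∩ τ = convexHull ℝ ↑Fτ)
    (hlt : StabLE σ τ) (hne : σ ≠ τ) :
    ∃ r : Fin d → ℝ, r ≠ 0 ∧ ∃ l m : ℝ, 0 ≤ l ∧ l < m ∧ l • r ∈ σ ∧ m • r ∈ τ :=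
  stmt16_general Vσ Vτ hcσ hcτ σ τ hσdef hτdef hlt hne
end

section
/- Let σ = conv(σ_P ∪ σ_Q) ⊆ ℝ^d × ℝ^e where σ_P ⊆ ℝ^d × {0} and σ_Q ⊆ {0} × ℝ^e are simplices whose vertex sets are disjoint and whose union is affinely independent. If σ_P ∩ σ_Q = ∅, then exactly one of σ_P, σ_Q contains the origin, and the origin is not a vertex of σ. -/
/-- If the simplex `σ = conv(σ_P ∪ σ_Q)` contains the origin, the vertex sets of
`σ_P ⊆ ℝ^d × {0}` and `σ_Q ⊆ {0} × ℝ^e` are disjoint, the union of the vertex sets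
is affinely independent and `σ_P ∩ σ_Q = ∅`, then exactly one of `σ_P`, `σ_Q`
contains the origin, and the origin is not a vertex of `σ`. -/
theorem stmt17 {d e : ℕ} (V : Finset ((Fin d → ℝ) × (Fin e → ℝ)))
    (hind : AffineIndependent ℝ (Subtype.val : ↥(V : Set ((Fin d → ℝ) × (Fin e → ℝ))) →
      (Fin d → ℝ) × (Fin e → ℝ)))
    (hsub : ∀ p ∈ V, p.2 = 0 ∨ p.1 = 0)
    (hdisj : {p : (Fin d → ℝ) × (Fin e → ℝ) | p ∈ V ∧ p.2 = 0} ∩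
             {p : (Fin d → ℝ) × (Fin e → ℝ) | p ∈ V ∧ p.1 = 0} = ∅)
    (hPQ : convexHull ℝ {p : (Fin d → ℝ) × (Fin e → ℝ) | p ∈ V ∧ p.2 = 0} ∩
           convexHull ℝ {p : (Fin d → ℝ) × (Fin e → ℝ) | p ∈ V ∧ p.1 = 0} = ∅)
    (h0σ : (0 : (Fin d → ℝ) × (Fin e → ℝ)) ∈
      convexHull ℝ (V : Set ((Fin d → ℝ) × (Fin e → ℝ)))) :
    Xor'
      ((0 : (Fin d → ℝ) × (Fin e → ℝ)) ∈
        convexHull ℝ {p : (Fin d → ℝ) × (Fin e → ℝ) | p ∈ V ∧ p.2 = 0})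
      ((0 : (Fin d → ℝ) × (Fin e → ℝ)) ∈
        convexHull ℝ {p : (Fin d → ℝ) × (Fin e → ℝ) | p ∈ V ∧ p.1 = 0}) ∧
    (0 : (Fin d → ℝ) × (Fin e → ℝ)) ∉ V := by
  classical
  set P : Finset ((Fin d → ℝ) × (Fin e → ℝ)) := V.filter (fun p => p.2 = 0) with hP
  set Q : Finset ((Fin d → ℝ) × (Fin e → ℝ)) := V.filter (fun p => p.1 = 0) with hQ
  have hPset : {p : (Fin d → ℝ) × (Fin e → ℝ) | p ∈ V ∧ p.2 = 0} = (P : Set ((Fin d → ℝ) × (Fin e → ℝ))) := by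
    ext x; simp [hP]
  have hQset : {p : (Fin d → ℝ) × (Fin e → ℝ) | p ∈ V ∧ p.1 = 0} = (Q : Set ((Fin d → ℝ) × (Fin e → ℝ))) := by
    ext x; simp [hQ]
  rw [hPset, hQset] at hPQ ⊢
  have h0V : (0 : (Fin d → ℝ) × (Fin e → ℝ)) ∉ V := by
    intro h
    have : (0 : (Fin d → ℝ) × (Fin e → ℝ)) ∈ ({p : (Fin d → ℝ) × (Fin e → ℝ) | p ∈ V ∧ p.2 = 0} ∩ {p : (Fin d → ℝ) × (Fin e → ℝ) | p ∈ V ∧ p.1 = 0}) :=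
      ⟨⟨h, rfl⟩, ⟨h, rfl⟩⟩
    rw [hdisj] at this
    exact this
  refine ⟨?_, h0V⟩
  -- extract weights
  obtain ⟨w, hw0, hw1, hwsum⟩ := Finset.mem_convexHull'.mp h0σ
  -- Q is the complement filter of P within V
  have hQcompl : Q = V.filter (fun p => ¬ p.2 = 0) := by
    ext x
    simp only [hQ, Finset.mem_filter]
    constructor
    · rintro ⟨hxV, hx1⟩
      refine ⟨hxV, fun hx2 => ?_⟩
      have : x ∈ ({p : (Fin d → ℝ) × (Fin e → ℝ) | p ∈ V ∧ p.2 = 0} ∩ {p : (Fin d → ℝ) × (Fin e → ℝ) | p ∈ V ∧ p.1 = 0}) :=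
        ⟨⟨hxV, hx2⟩, ⟨hxV, hx1⟩⟩
      rw [hdisj] at this; exact this
    · rintro ⟨hxV, hx2⟩
      exact ⟨hxV, (hsub x hxV).resolve_left hx2⟩
  have hsplit : (∑ y ∈ P, w y • y) + (∑ y ∈ Q, w y • y) = 0 := by
    rw [hQcompl, hP, Finset.sum_filter_add_sum_filter_not, hwsum]
  have hsplitw : (∑ y ∈ P, w y) + (∑ y ∈ Q, w y) = 1 := by
    rw [hQcompl, hP, Finset.sum_filter_add_sum_filter_not, hw1]
  -- second components of P-sum vanish, first components of Q-sum vanish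
  have hA2 : (∑ y ∈ P, w y • y).2 = 0 := by
    rw [Prod.snd_sum]
    refine Finset.sum_eq_zero fun y hy => ?_
    have : y.2 = 0 := (Finset.mem_filter.mp hy).2
    simp [this]
  have hB1 : (∑ y ∈ Q, w y • y).1 = 0 := by
    rw [Prod.fst_sum]
    refine Finset.sum_eq_zero fun y hy => ?_
    have : y.1 = 0 := (Finset.mem_filter.mp hy).2
    simp [this]
  have hA : (∑ y ∈ P, w y • y) = 0 := by
    have h1 : (∑ y ∈ P, w y • y).1 + (∑ y ∈ Q, w y • y).1 = 0 := by
      rw [← Prod.fst_add, hsplit]; rfl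
    rw [hB1, add_zero] at h1
    exact Prod.ext h1 hA2
  have hB : (∑ y ∈ Q, w y • y) = 0 := by
    have := hsplit
    rw [hA, zero_add] at this
    exact this
  have hw0P : ∀ y ∈ P, 0 ≤ w y := fun y hy => hw0 y (Finset.mem_filter.mp hy).1
  have hw0Q : ∀ y ∈ Q, 0 ≤ w y := fun y hy => hw0 y (Finset.mem_filter.mp hy).1
  have key : ∀ (S : Finset ((Fin d → ℝ) × (Fin e → ℝ))), (∀ y ∈ S, 0 ≤ w y) → (0 < ∑ y ∈ S, w y) →
      (∑ y ∈ S, w y • y) = 0 → (0 : (Fin d → ℝ) × (Fin e → ℝ)) ∈ convexHull ℝ (S : Set ((Fin d → ℝ) × (Fin e → ℝ))) := by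
    intro S hS0 hSpos hSsum
    have := S.centerMass_mem_convexHull hS0 hSpos (fun x hx => Finset.mem_coe.mpr hx)
    rw [Finset.centerMass] at this
    rwa [hSsum, smul_zero] at this
  have hnotboth : ¬ ((0 : (Fin d → ℝ) × (Fin e → ℝ)) ∈ convexHull ℝ (P : Set ((Fin d → ℝ) × (Fin e → ℝ))) ∧
      (0 : (Fin d → ℝ) × (Fin e → ℝ)) ∈ convexHull ℝ (Q : Set ((Fin d → ℝ) × (Fin e → ℝ)))) := by
    rintro ⟨h1, h2⟩
    have : (0 : (Fin d → ℝ) × (Fin e → ℝ)) ∈ (convexHull ℝ (P : Set ((Fin d → ℝ) × (Fin e → ℝ))) ∩ convexHull ℝ (Q : Set ((Fin d → ℝ) × (Fin e → ℝ)))) := ⟨h1, h2⟩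
    rw [hPQ] at this; exact this
  rcases lt_or_ge 0 (∑ y ∈ P, w y) with ht | ht
  · exact Or.inl ⟨key P hw0P ht hA, fun h2 => hnotboth ⟨key P hw0P ht hA, h2⟩⟩
  · have hq : 0 < ∑ y ∈ Q, w y := by linarith
    exact Or.inr ⟨key Q hw0Q hq hB, fun h1 => hnotboth ⟨h1, key Q hw0Q hq hB⟩⟩
end

section
/- Let σ, τ ⊆ ℝ^{d+e} be convex polytopes, let a ∈ ℝ^d, c ∈ ℝ^e, b ∈ ℝ with (a,c) ≠ 0, and suppose: every vertex of σ lies in (ℝ^d × {0}) ∪ ({0} × ℝ^e) and satisfies (aᵀ,cᵀ)v ≤ b, while every vertex of τ satisfies (aᵀ,cᵀ)w ≥ b; moreover every vertex v of σ with (aᵀ,cᵀ)v = b lies in τ and every vertex w of τ with (aᵀ,cᵀ)w = b lies in σ. Then σ ∩ τ = σ ∩ J = J ∩ τ where J = {x : (aᵀ,cᵀ)x = b}, and σ ∩ τ is a common face of σ and τ. -/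
open Matrix

/-!
Let `f` be the linear functional defining `J`, so `f ≤ b` on `σ` and `f ≥ b` on `τ`.
In a convex combination of vertices of `σ` landing on `J`, every vertex with positive weight
already lies on `J`, so `σ ∩ J` is the convex hull of the vertices of `σ` on `J`; these lie
in `τ`, hence `σ ∩ J ⊆ τ`, and symmetrically `τ ∩ J ⊆ σ`. Separation gives `σ ∩ τ ⊆ J`, and a
hyperplane bounding a convex set from one side cuts out an extreme subset of it.
-/

section Hyperplane

variable {𝕜 E : Type*} [Field 𝕜] [LinearOrder 𝕜] [IsStrictOrderedRing 𝕜]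
  [AddCommGroup E] [Module 𝕜 E] (f : E →ₗ[𝕜] 𝕜) {b : 𝕜} {s t : Finset E}

theorem isExtreme_inter_setOf_eq_of_le {A : Set E} (hA : ∀ x ∈ A, f x ≤ b) :
    IsExtreme 𝕜 A (A ∩ {x | f x = b}) := by
  refine ⟨Set.inter_subset_left, fun x₁ hx₁ x₂ hx₂ x ⟨_, hfx⟩ hx => ⟨hx₁, ?_⟩⟩
  refine (hA x₁ hx₁).antisymm (hfx ▸ ?_)
  exact (f.convexOn convex_univ).le_left_of_right_le trivial trivial hx (hfx ▸ hA x₂ hx₂)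

theorem isExtreme_inter_setOf_eq_of_ge {A : Set E} (hA : ∀ x ∈ A, b ≤ f x) :
    IsExtreme 𝕜 A (A ∩ {x | f x = b}) := by
  simpa only [LinearMap.neg_apply, neg_inj] using
    isExtreme_inter_setOf_eq_of_le (-f) (b := -b) fun x hx => neg_le_neg (hA x hx)

theorem convexHull_inter_setOf_eq_subset_of_le (hs : ∀ v ∈ s, f v ≤ b) :
    convexHull 𝕜 ↑s ∩ {x | f x = b} ⊆ convexHull 𝕜 (↑s ∩ {x | f x = b}) := by
  rintro x ⟨hx, hfx⟩
  obtain ⟨w, hw₀, hw₁, rfl⟩ := Finset.mem_convexHull'.mp hx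
  have hsum : ∑ v ∈ s, w v * f v = ∑ v ∈ s, w v * b := by
    rw [← Finset.sum_mul, hw₁, one_mul, ← hfx, map_sum]
    simp only [map_smul, smul_eq_mul]
  have hterm := (Finset.sum_eq_sum_iff_of_le fun v hv =>
    mul_le_mul_of_nonneg_left (hs v hv) (hw₀ v hv)).mp hsum
  have hsupport : ∀ v ∈ s, w v ≠ 0 → f v = b := fun v hv hw =>
    (mul_eq_mul_left_iff.mp (hterm v hv)).resolve_right hw
  have hcomb : ∑ v ∈ s with f v = b, w v • v = ∑ v ∈ s, w v • v :=
    Finset.sum_filter_of_ne fun v hv h => hsupport v hv (left_ne_zero_of_smul h)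
  have hweights : ∑ v ∈ s with f v = b, w v = 1 := hw₁ ▸ Finset.sum_filter_of_ne hsupport
  rw [← hcomb]
  refine (convex_convexHull 𝕜 _).sum_mem (fun v hv => hw₀ v (Finset.mem_filter.mp hv).1)
    hweights fun v hv => subset_convexHull 𝕜 _ (Finset.mem_filter.mp hv)

theorem convexHull_inter_convexHull_eq_inter_setOf_eq (hs : ∀ v ∈ s, f v ≤ b)
    (ht : ∀ w ∈ t, b ≤ f w) (hst : ∀ v ∈ s, f v = b → v ∈ convexHull 𝕜 (t : Set E)) :
    convexHull 𝕜 (s : Set E) ∩ convexHull 𝕜 ↑t = convexHull 𝕜 ↑s ∩ {x | f x = b} := by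
  have hs' := convexHull_min hs (convex_halfSpace_le f.isLinear b)
  have ht' := convexHull_min ht (convex_halfSpace_ge f.isLinear b)
  refine Set.Subset.antisymm (fun x ⟨hxs, hxt⟩ => ⟨hxs, le_antisymm (hs' hxs) (ht' hxt)⟩) ?_
  refine Set.subset_inter Set.inter_subset_left
    ((convexHull_inter_setOf_eq_subset_of_le f hs).trans ?_)
  exact convexHull_min (fun v ⟨hv, hfv⟩ => hst v hv hfv) (convex_convexHull 𝕜 _)

theorem convexHull_inter_convexHull_eq_setOf_eq_inter (hs : ∀ v ∈ s, f v ≤ b)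
    (ht : ∀ w ∈ t, b ≤ f w) (hts : ∀ w ∈ t, f w = b → w ∈ convexHull 𝕜 (s : Set E)) :
    convexHull 𝕜 (s : Set E) ∩ convexHull 𝕜 ↑t = {x | f x = b} ∩ convexHull 𝕜 ↑t := by
  rw [Set.inter_comm, Set.inter_comm {x | f x = b}]
  simpa only [LinearMap.neg_apply, neg_inj] using
    convexHull_inter_convexHull_eq_inter_setOf_eq (-f) (b := -b)
      (fun w hw => neg_le_neg (ht w hw)) (fun v hv => neg_le_neg (hs v hv))
      fun w hw hfw => hts w hw (neg_inj.mp hfw)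

end Hyperplane

theorem stmt19_general {d e : ℕ} (Vσ Vτ : Finset ((Fin d → ℝ) × (Fin e → ℝ)))
    (a : Fin d → ℝ) (c : Fin e → ℝ) (b : ℝ)
    (hVσ : ∀ v ∈ Vσ, a ⬝ᵥ v.1 + c ⬝ᵥ v.2 ≤ b)
    (hVτ : ∀ w ∈ Vτ, b ≤ a ⬝ᵥ w.1 + c ⬝ᵥ w.2)
    (hσb : ∀ v ∈ Vσ, a ⬝ᵥ v.1 + c ⬝ᵥ v.2 = b →
      v ∈ convexHull ℝ (Vτ : Set ((Fin d → ℝ) × (Fin e → ℝ))))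
    (hτb : ∀ w ∈ Vτ, a ⬝ᵥ w.1 + c ⬝ᵥ w.2 = b →
      w ∈ convexHull ℝ (Vσ : Set ((Fin d → ℝ) × (Fin e → ℝ)))) :
    convexHull ℝ (Vσ : Set ((Fin d → ℝ) × (Fin e → ℝ))) ∩ convexHull ℝ ↑Vτ =
      convexHull ℝ ↑Vσ ∩ {x : (Fin d → ℝ) × (Fin e → ℝ) | a ⬝ᵥ x.1 + c ⬝ᵥ x.2 = b} ∧
    convexHull ℝ (Vσ : Set ((Fin d → ℝ) × (Fin e → ℝ))) ∩
        {x : (Fin d → ℝ) × (Fin e → ℝ) | a ⬝ᵥ x.1 + c ⬝ᵥ x.2 = b} =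
      {x : (Fin d → ℝ) × (Fin e → ℝ) | a ⬝ᵥ x.1 + c ⬝ᵥ x.2 = b} ∩ convexHull ℝ ↑Vτ ∧
    IsExtreme ℝ (convexHull ℝ (Vσ : Set ((Fin d → ℝ) × (Fin e → ℝ))))
      (convexHull ℝ ↑Vσ ∩ convexHull ℝ ↑Vτ) ∧
    IsExtreme ℝ (convexHull ℝ (Vτ : Set ((Fin d → ℝ) × (Fin e → ℝ))))
      (convexHull ℝ ↑Vσ ∩ convexHull ℝ ↑Vτ) := by
  set f := (dotProductBilin ℝ ℝ a).coprod (dotProductBilin ℝ ℝ c)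
  have hσJ := convexHull_inter_convexHull_eq_inter_setOf_eq f hVσ hVτ hσb
  have hJτ := convexHull_inter_convexHull_eq_setOf_eq_inter f hVσ hVτ hτb
  refine ⟨hσJ, hσJ.symm.trans hJτ, ?_, ?_⟩
  · rw [hσJ]
    exact isExtreme_inter_setOf_eq_of_le f
      (convexHull_min hVσ (convex_halfSpace_le f.isLinear b))
  · rw [hJτ, Set.inter_comm]
    exact isExtreme_inter_setOf_eq_of_ge f
      (convexHull_min hVτ (convex_halfSpace_ge f.isLinear b))

/-- If `J = {x : aᵀx₁ + cᵀx₂ = b}` weakly separates the polytopes `σ = conv Vσ` and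
`τ = conv Vτ` and the vertices lying on `J` are common to both polytopes, then
`σ ∩ τ = σ ∩ J = J ∩ τ` and `σ ∩ τ` is a common face of `σ` and `τ`. -/
theorem stmt19 {d e : ℕ} (Vσ Vτ : Finset ((Fin d → ℝ) × (Fin e → ℝ)))
    (a : Fin d → ℝ) (c : Fin e → ℝ) (b : ℝ) (hac : ¬(a = 0 ∧ c = 0))
    (hVσsub : ∀ v ∈ Vσ, v.2 = 0 ∨ v.1 = 0)
    (hVσ : ∀ v ∈ Vσ, a ⬝ᵥ v.1 + c ⬝ᵥ v.2 ≤ b)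
    (hVτ : ∀ w ∈ Vτ, b ≤ a ⬝ᵥ w.1 + c ⬝ᵥ w.2)
    (hσb : ∀ v ∈ Vσ, a ⬝ᵥ v.1 + c ⬝ᵥ v.2 = b →
      v ∈ convexHull ℝ (Vτ : Set ((Fin d → ℝ) × (Fin e → ℝ))))
    (hτb : ∀ w ∈ Vτ, a ⬝ᵥ w.1 + c ⬝ᵥ w.2 = b →
      w ∈ convexHull ℝ (Vσ : Set ((Fin d → ℝ) × (Fin e → ℝ)))) :
    convexHull ℝ (Vσ : Set ((Fin d → ℝ) × (Fin e → ℝ))) ∩ convexHull ℝ ↑Vτ =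
      convexHull ℝ ↑Vσ ∩ {x : (Fin d → ℝ) × (Fin e → ℝ) | a ⬝ᵥ x.1 + c ⬝ᵥ x.2 = b} ∧
    convexHull ℝ (Vσ : Set ((Fin d → ℝ) × (Fin e → ℝ))) ∩
        {x : (Fin d → ℝ) × (Fin e → ℝ) | a ⬝ᵥ x.1 + c ⬝ᵥ x.2 = b} =
      {x : (Fin d → ℝ) × (Fin e → ℝ) | a ⬝ᵥ x.1 + c ⬝ᵥ x.2 = b} ∩ convexHull ℝ ↑Vτ ∧
    IsExtreme ℝ (convexHull ℝ (Vσ : Set ((Fin d → ℝ) × (Fin e → ℝ))))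
      (convexHull ℝ ↑Vσ ∩ convexHull ℝ ↑Vτ) ∧
    IsExtreme ℝ (convexHull ℝ (Vτ : Set ((Fin d → ℝ) × (Fin e → ℝ))))
      (convexHull ℝ ↑Vσ ∩ convexHull ℝ ↑Vτ) :=
  stmt19_general Vσ Vτ a c b hVσ hVτ hσb hτb
end
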